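/- arXiv:1703.03922 — 2 statements merged into one kernel-verified Lean document; each statement's English description precedes it below -/
import Mathlib

section
/- Let a < b be real numbers, 0 < μ < 1 and 0 < ν < 1. Let k : (0,∞) → ℝ be integrable on (0, b−a), and define κ(s) = (1/Γ((1−ν)(1−μ))) ∫_0^s (s−r)^{(1−ν)(1−μ)−1} k(r) dr for s > 0. Assume κ extends to a continuously differentiable function on [0, b−a) with κ(0) = 0, and let φ : [a,b] → ℝ be continuous. Then for every x ∈ (a,b), (D^{μ,ν}_{a+}(K_k φ))(x) = ∫_a^x m(x−u) φ(u) du, where m(s) = (1/Γ(ν(1−μ))) ∫_0^s (s−r)^{ν(1−μ)−1} κ′(r) dr. (Kernel form of the paper's Theorem 4: the Hilfer fractional derivative of the H-kernel operator is again an operator of the same convolution type.) -/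
open MeasureTheory Set

/-- The Riemann–Liouville fractional integral `(I^μ_{a+} φ)(x)`. -/
noncomputable def riemannLiouville (μ a : ℝ) (φ : ℝ → ℝ) (x : ℝ) : ℝ :=
  (Real.Gamma μ)⁻¹ * ∫ t in a..x, (x - t) ^ (μ - 1) * φ t

/-- The convolution-type operator `(K_k φ)(x) = ∫_a^x k(x−t) φ(t) dt`. -/
noncomputable def kernelOp (a : ℝ) (k φ : ℝ → ℝ) (x : ℝ) : ℝ :=
  ∫ t in a..x, k (x - t) * φ t

/-!
Every operator in sight is a convolution operator `K_f φ (x) = ∫_a^x f (x - t) φ t`: the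
Riemann–Liouville integral `I^γ_{a+}` is `K_ρ` with `ρ s = s^(γ-1)/Γ(γ)`, and Fubini on the
triangle `a < s < t < x` gives `K_f ∘ K_g = K_{f ⋆ g}` with the Laplace convolution
`f ⋆ g = K^{(0)}_f g` (that is, `kernelOp 0 f g`). Hence `I^{(1-ν)(1-μ)}_{a+} K_k φ = K_κ φ`,
and since `κ(0) = 0` we have `κ = 1 ⋆ κ'`, so this equals `∫_a^y K_{κ'} φ`. The integrand is
continuous, so its derivative is `K_{κ'} φ`, and one more composition gives
`I^{ν(1-μ)}_{a+} K_{κ'} φ = K_{ρ ⋆ κ'} φ`, which is the claimed operator.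
-/

open Topology Filter

noncomputable def rlKernel (γ s : ℝ) : ℝ :=
  (Real.Gamma γ)⁻¹ * s ^ (γ - 1)

theorem riemannLiouville_eq_kernelOp (γ a : ℝ) (φ : ℝ → ℝ) :
    riemannLiouville γ a φ = kernelOp a (rlKernel γ) φ := funext fun x => by
  simp only [riemannLiouville, kernelOp, rlKernel, mul_assoc, intervalIntegral.integral_const_mul]

theorem integrableOn_rlKernel {γ : ℝ} (hγ : 0 < γ) (c : ℝ) :
    IntegrableOn (rlKernel γ) (Ioo 0 c) := by
  rcases le_or_gt c 0 with hc | hc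
  · simp [Ioo_eq_empty_of_le hc]
  have h := (intervalIntegral.intervalIntegrable_rpow' (a := 0) (b := c) (r := γ - 1)
    (by linarith)).const_mul (Real.Gamma γ)⁻¹
  rw [intervalIntegrable_iff_integrableOn_Ioc_of_le hc.le] at h
  exact h.mono_set Ioo_subset_Ioc_self

theorem kernelOp_congr_kernel {a x : ℝ} {k₁ k₂ : ℝ → ℝ} (φ : ℝ → ℝ) (hax : a ≤ x)
    (h : EqOn k₁ k₂ (Icc 0 (x - a))) : kernelOp a k₁ φ x = kernelOp a k₂ φ x := by
  refine intervalIntegral.integral_congr fun t ht => ?_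
  rw [uIcc_of_le hax] at ht
  simp only [h ⟨sub_nonneg.2 ht.2, by linarith [ht.1]⟩]

theorem kernelOp_congr_of_eqOn_Ioo {a x : ℝ} (k : ℝ → ℝ) {φ ψ : ℝ → ℝ} (hax : a ≤ x)
    (h : EqOn φ ψ (Ioo a x)) : kernelOp a k φ x = kernelOp a k ψ x := by
  simp only [kernelOp, intervalIntegral.integral_of_le hax, integral_Ioc_eq_integral_Ioo]
  exact setIntegral_congr_fun measurableSet_Ioo fun t ht => by rw [h ht]

theorem kernelOp_eq_integral_indicator {a x c d : ℝ} (k φ : ℝ → ℝ) (hax : a ≤ x)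
    (hc : x - a ≤ c) (hd : x ≤ d) :
    kernelOp a k φ x = ∫ t, (Ioo 0 c).indicator k (x - t) * (Ioo a d).indicator φ t := by
  have h : ∀ t, (Ioo 0 c).indicator k (x - t) * (Ioo a d).indicator φ t
      = (Ioo a x).indicator (fun t => k (x - t) * φ t) t := by
    intro t
    simp only [indicator, mem_Ioo]
    split_ifs <;> first | rfl | (exfalso; grind) | simp
  simp only [h, integral_indicator measurableSet_Ioo, kernelOp, intervalIntegral.integral_of_le hax,
    integral_Ioc_eq_integral_Ioo]

theorem integrable_comp_sub_mul_comp_sub {F G : ℝ → ℝ} (hF : Integrable F) (hG : Integrable G)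
    (x : ℝ) : Integrable (fun p : ℝ × ℝ => F (x - p.1) * G (p.1 - p.2)) (volume.prod volume) := by
  have hconv : Integrable (fun p : ℝ × ℝ => F p.2 * G (p.1 - p.2)) (volume.prod volume) :=
    hF.convolution_integrand (ContinuousLinearMap.mul ℝ ℝ) hG
  -- `(t, s) ↦ (x - s, x - t)` turns the convolution integrand into `F (x - t) * G (t - s)`
  have hT : MeasurePreserving (fun p : ℝ × ℝ => (x - p.2, x - p.1))
      (volume.prod volume) (volume.prod volume) :=
    ((Measure.measurePreserving_sub_left volume x).prod
      (Measure.measurePreserving_sub_left volume x)).comp Measure.measurePreserving_swap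
  convert hT.integrable_comp_of_integrable hconv using 2 with p
  simp only [Function.comp_apply]
  ring_nf

theorem kernelOp_kernelOp {a x : ℝ} {f g φ : ℝ → ℝ} (hax : a ≤ x)
    (hf : IntegrableOn f (Ioo 0 (x - a))) (hg : IntegrableOn g (Ioo 0 (x - a)))
    (hφ : ContinuousOn φ (Icc a x)) :
    kernelOp a f (kernelOp a g φ) x = kernelOp a (kernelOp 0 f g) φ x := by
  set F := (Ioo 0 (x - a)).indicator f
  set G := (Ioo 0 (x - a)).indicator g
  set Φ := (Ioo a x).indicator φ
  have hF_eq_zero : ∀ t ∉ Ioo a x, F (x - t) = 0 := fun t ht =>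
    indicator_of_notMem (fun h => ht ⟨by linarith [h.2], by linarith [h.1]⟩) f
  have hint : Integrable (fun p : ℝ × ℝ => F (x - p.1) * G (p.1 - p.2) * Φ p.2)
      (volume.prod volume) := by
    obtain ⟨C, hC⟩ := isCompact_Icc.exists_bound_of_continuousOn hφ
    refine (integrable_comp_sub_mul_comp_sub ((integrable_indicator_iff measurableSet_Ioo).2 hf)
      ((integrable_indicator_iff measurableSet_Ioo).2 hg) x).mul_bdd (c := max C 0) ?_ ?_
    · exact ((aestronglyMeasurable_indicator_iff measurableSet_Ioo).2
        ((hφ.mono Ioo_subset_Icc_self).aestronglyMeasurable measurableSet_Ioo)).comp_snd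
    · refine Eventually.of_forall fun p => ?_
      show ‖(Ioo a x).indicator φ p.2‖ ≤ max C 0
      by_cases hp : p.2 ∈ Ioo a x
      · rw [indicator_of_mem hp]
        exact le_max_of_le_left (hC p.2 (Ioo_subset_Icc_self hp))
      · rw [indicator_of_notMem hp, norm_zero]
        exact le_max_right C 0
  have hinner_s : ∀ t, F (x - t) * (Ioo a x).indicator (kernelOp a g φ) t
      = ∫ s, F (x - t) * G (t - s) * Φ s := by
    intro t
    simp only [mul_assoc, integral_const_mul]
    by_cases ht : t ∈ Ioo a x
    · rw [indicator_of_mem ht, kernelOp_eq_integral_indicator (c := x - a) (d := x) g φ ht.1.le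
        (by linarith [ht.2]) ht.2.le]
    · rw [hF_eq_zero t ht, zero_mul, zero_mul]
  have hinner_t : ∀ s, ∫ t, F (x - t) * G (t - s) * Φ s
      = (Ioo 0 (x - a)).indicator (kernelOp 0 f g) (x - s) * Φ s := by
    intro s
    rw [integral_mul_const]
    by_cases hs : s ∈ Ioo a x
    · rw [indicator_of_mem (show x - s ∈ Ioo 0 (x - a) by constructor <;> linarith [hs.1, hs.2]),
        kernelOp_eq_integral_indicator (c := x - a) (d := x - a) f g (sub_nonneg.2 hs.2.le)
          (by linarith [hs.1]) (by linarith [hs.1]),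
        ← integral_add_right_eq_self _ s]
      simp only [add_sub_cancel_right, sub_add_eq_sub_sub_swap, F, G]
    · simp [Φ, hs]
  calc kernelOp a f (kernelOp a g φ) x
      = ∫ t, F (x - t) * (Ioo a x).indicator (kernelOp a g φ) t :=
        kernelOp_eq_integral_indicator _ _ hax le_rfl le_rfl
    _ = ∫ t, ∫ s, F (x - t) * G (t - s) * Φ s := by simp only [hinner_s]
    _ = ∫ s, ∫ t, F (x - t) * G (t - s) * Φ s := integral_integral_swap hint
    _ = ∫ s, (Ioo 0 (x - a)).indicator (kernelOp 0 f g) (x - s) * Φ s := by simp only [hinner_t]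
    _ = kernelOp a (kernelOp 0 f g) φ x :=
        (kernelOp_eq_integral_indicator _ _ hax le_rfl le_rfl).symm

theorem continuousOn_kernelOp {a d : ℝ} {K φ : ℝ → ℝ} (hK : ContinuousOn K (Icc 0 (d - a)))
    (hφ : ContinuousOn φ (Icc a d)) : ContinuousOn (kernelOp a K φ) (Icc a d) := by
  rcases lt_or_ge d a with hda | had
  · simp [Icc_eq_empty_of_lt hda]
  set K' := IccExtend (sub_nonneg.2 had) ((Icc 0 (d - a)).domRestrict K)
  set φ' := IccExtend had ((Icc a d).domRestrict φ)
  have hK' : Continuous K' := (continuousOn_iff_continuous_domRestrict.1 hK).Icc_extend'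
  have hφ' : Continuous φ' := (continuousOn_iff_continuous_domRestrict.1 hφ).Icc_extend'
  refine (intervalIntegral.continuous_parametric_intervalIntegral_of_continuous
    (f := fun u s => K' (u - s) * φ' s) (by fun_prop) continuous_id).continuousOn.congr
    fun u hu => intervalIntegral.integral_congr fun s hs => ?_
  rw [uIcc_of_le hu.1] at hs
  have hus : u - s ∈ Icc 0 (d - a) := ⟨sub_nonneg.2 hs.2, by linarith [hs.1, hu.2]⟩
  simp only [K', φ', IccExtend_of_mem _ _ hus, IccExtend_of_mem _ _ ⟨hs.1, hs.2.trans hu.2⟩,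
    domRestrict_apply]

theorem deriv_eq_of_eventuallyEq_primitive {F G : ℝ → ℝ} {a d t : ℝ}
    (hG : ContinuousOn G (Icc a d)) (ht : t ∈ Ioo a d)
    (hF : F =ᶠ[𝓝 t] fun y => ∫ u in a..y, G u) : deriv F t = G t := by
  rw [hF.deriv_eq]
  exact (intervalIntegral.integral_hasDerivAt_right
    ((hG.mono (Icc_subset_Icc_right ht.2.le)).intervalIntegrable_of_Icc ht.1.le)
    ((hG.mono Ioo_subset_Icc_self).stronglyMeasurableAtFilter isOpen_Ioo t ht)
    (hG.continuousAt (Icc_mem_nhds ht.1 ht.2))).deriv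

theorem integral_derivWithin_Ico_eq_sub {f : ℝ → ℝ} {a b s : ℝ} (hf : ContDiffOn ℝ 1 f (Ico a b))
    (hs : s ∈ Ico a b) : ∫ r in a..s, derivWithin f (Ico a b) r = f s - f a := by
  rw [← intervalIntegral.integral_derivWithin_Icc_of_contDiffOn_Icc
      (hf.mono (Icc_subset_Ico_right hs.2)) hs.1,
    intervalIntegral.integral_of_le hs.1, intervalIntegral.integral_of_le hs.1,
    integral_Ioc_eq_integral_Ioo, integral_Ioc_eq_integral_Ioo]
  refine setIntegral_congr_fun measurableSet_Ioo fun r hr => ?_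
  rw [derivWithin_of_mem_nhds (Ico_mem_nhds hr.1 (hr.2.trans hs.2)),
    derivWithin_of_mem_nhds (Icc_mem_nhds hr.1 hr.2)]

theorem riemannLiouville_kernelOp_eq_integral {γ c a y : ℝ} {k κ φ : ℝ → ℝ} (hγ : 0 < γ)
    (hk : IntegrableOn k (Ioo 0 c)) (hκ : ∀ s ∈ Ioo 0 c, κ s = riemannLiouville γ 0 k s)
    (hκ₁ : ContDiffOn ℝ 1 κ (Ico 0 c)) (hκ0 : κ 0 = 0) (hay : a ≤ y) (hyc : y - a < c)
    (hφ : ContinuousOn φ (Icc a y)) :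
    riemannLiouville γ a (kernelOp a k φ) y
      = ∫ u in a..y, kernelOp a (derivWithin κ (Ico 0 c)) φ u := by
  set κ' := derivWithin κ (Ico 0 c)
  have hκ' : ContinuousOn κ' (Icc 0 (y - a)) :=
    (hκ₁.continuousOn_derivWithin (uniqueDiffOn_Ico 0 c) le_rfl).mono (Icc_subset_Ico_right hyc)
  -- `κ = I^γ_{0+} k` by hypothesis and `κ = ∫₀ κ'` by the fundamental theorem of calculus
  have hκ_conv : EqOn (kernelOp 0 (rlKernel γ) k) (kernelOp 0 (fun _ => 1) κ') (Icc 0 (y - a)) := by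
    intro s hs
    have hsc : s ∈ Ico 0 c := ⟨hs.1, hs.2.trans_lt hyc⟩
    have hκs : kernelOp 0 (fun _ => 1) κ' s = κ s := by
      simpa [kernelOp, hκ0] using integral_derivWithin_Ico_eq_sub hκ₁ hsc
    rw [hκs, ← riemannLiouville_eq_kernelOp]
    rcases hs.1.eq_or_lt with rfl | hs0
    · simp [riemannLiouville, hκ0]
    · exact (hκ s ⟨hs0, hsc.2⟩).symm
  calc riemannLiouville γ a (kernelOp a k φ) y
      = kernelOp a (kernelOp 0 (rlKernel γ) k) φ y := by
        rw [riemannLiouville_eq_kernelOp, kernelOp_kernelOp hay (integrableOn_rlKernel hγ _)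
          (hk.mono_set (Ioo_subset_Ioo_right hyc.le)) hφ]
    _ = kernelOp a (kernelOp 0 (fun _ => 1) κ') φ y := kernelOp_congr_kernel φ hay hκ_conv
    _ = ∫ u in a..y, kernelOp a κ' φ u := by
        rw [← kernelOp_kernelOp hay (integrableOn_const measure_Ioo_lt_top.ne)
          (hκ'.integrableOn_Icc.mono_set Ioo_subset_Icc_self) hφ]
        simp only [kernelOp, one_mul]

theorem deriv_riemannLiouville_kernelOp {γ a b t : ℝ} {k κ φ : ℝ → ℝ} (hγ : 0 < γ)
    (hk : IntegrableOn k (Ioo 0 (b - a)))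
    (hκ : ∀ s ∈ Ioo 0 (b - a), κ s = riemannLiouville γ 0 k s)
    (hκ₁ : ContDiffOn ℝ 1 κ (Ico 0 (b - a))) (hκ0 : κ 0 = 0) (hφ : ContinuousOn φ (Icc a b))
    (ht : t ∈ Ioo a b) :
    deriv (riemannLiouville γ a (kernelOp a k φ)) t
      = kernelOp a (derivWithin κ (Ico 0 (b - a))) φ t := by
  obtain ⟨d, htd, hdb⟩ := exists_between ht.2
  refine deriv_eq_of_eventuallyEq_primitive (continuousOn_kernelOp ?_
    (hφ.mono (Icc_subset_Icc_right hdb.le))) ⟨ht.1, htd⟩ ?_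
  · exact (hκ₁.continuousOn_derivWithin (uniqueDiffOn_Ico 0 (b - a)) le_rfl).mono
      (Icc_subset_Ico_right (by linarith))
  · filter_upwards [isOpen_Ioo.mem_nhds ht] with y hy
    exact riemannLiouville_kernelOp_eq_integral hγ hk hκ hκ₁ hκ0 hy.1.le (by linarith [hy.2])
      (hφ.mono (Icc_subset_Icc_right hy.2.le))

theorem hilfer_deriv_of_kernelOp_general (a b μ ν : ℝ)
    (hμ1 : μ < 1) (hν0 : 0 < ν) (hν1 : ν < 1) (k κ φ : ℝ → ℝ)
    (hk : IntegrableOn k (Ioo 0 (b - a)))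
    (hκeq : ∀ s ∈ Ioo 0 (b - a),
      κ s = (Real.Gamma ((1 - ν) * (1 - μ)))⁻¹ *
        ∫ r in (0:ℝ)..s, (s - r) ^ ((1 - ν) * (1 - μ) - 1) * k r)
    (hκsm : ContDiffOn ℝ 1 κ (Ico 0 (b - a)))
    (hκ0 : κ 0 = 0)
    (hφ : ContinuousOn φ (Icc a b)) :
    ∀ x ∈ Ioo a b,
      riemannLiouville (ν * (1 - μ)) a
          (deriv (fun y => riemannLiouville ((1 - ν) * (1 - μ)) a (kernelOp a k φ) y)) x
        = ∫ u in a..x,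
            ((Real.Gamma (ν * (1 - μ)))⁻¹ *
              ∫ r in (0:ℝ)..(x - u),
                (x - u - r) ^ (ν * (1 - μ) - 1) * derivWithin κ (Ico 0 (b - a)) r) * φ u := by
  intro x ⟨hax, hxb⟩
  set γ₁ := (1 - ν) * (1 - μ)
  set γ₂ := ν * (1 - μ)
  set κ' := derivWithin κ (Ico 0 (b - a))
  have hγ₁ : 0 < γ₁ := mul_pos (by linarith) (by linarith)
  have hγ₂ : 0 < γ₂ := mul_pos hν0 (by linarith)
  have hderiv : EqOn (deriv fun y => riemannLiouville γ₁ a (kernelOp a k φ) y)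
      (kernelOp a κ' φ) (Ioo a x) := fun t ht =>
    deriv_riemannLiouville_kernelOp hγ₁ hk hκeq hκsm hκ0 hφ ⟨ht.1, ht.2.trans hxb⟩
  have hκ'_int : IntegrableOn κ' (Ioo 0 (x - a)) :=
    ((hκsm.continuousOn_derivWithin (uniqueDiffOn_Ico 0 (b - a)) le_rfl).mono
      (Icc_subset_Ico_right (by linarith))).integrableOn_Icc.mono_set Ioo_subset_Icc_self
  calc riemannLiouville γ₂ a (deriv fun y => riemannLiouville γ₁ a (kernelOp a k φ) y) x
      = kernelOp a (rlKernel γ₂) (kernelOp a κ' φ) x := by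
        rw [riemannLiouville_eq_kernelOp γ₂]
        exact kernelOp_congr_of_eqOn_Ioo _ hax.le hderiv
    _ = kernelOp a (kernelOp 0 (rlKernel γ₂) κ') φ x :=
        kernelOp_kernelOp hax.le (integrableOn_rlKernel hγ₂ _) hκ'_int
          (hφ.mono (Icc_subset_Icc_right hxb.le))
    _ = _ := by rw [← riemannLiouville_eq_kernelOp]; rfl

/-- Kernel form of Theorem 4: the Hilfer fractional derivative
`(D^{μ,ν}_{a+} f)(x) = (I^{ν(1−μ)}_{a+} (d/dx) I^{(1−ν)(1−μ)}_{a+} f)(x)` of the kernel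
operator `K_k` is again an operator of the same convolution type, with kernel
`m(s) = (1/Γ(ν(1−μ))) ∫_0^s (s−r)^{ν(1−μ)−1} κ′(r) dr`. -/
theorem hilfer_deriv_of_kernelOp (a b μ ν : ℝ) (hab : a < b)
    (hμ0 : 0 < μ) (hμ1 : μ < 1) (hν0 : 0 < ν) (hν1 : ν < 1) (k κ φ : ℝ → ℝ)
    (hk : IntegrableOn k (Ioo 0 (b - a)))
    (hκeq : ∀ s ∈ Ioo 0 (b - a),
      κ s = (Real.Gamma ((1 - ν) * (1 - μ)))⁻¹ *
        ∫ r in (0:ℝ)..s, (s - r) ^ ((1 - ν) * (1 - μ) - 1) * k r)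
    (hκsm : ContDiffOn ℝ 1 κ (Ico 0 (b - a)))
    (hκ0 : κ 0 = 0)
    (hφ : ContinuousOn φ (Icc a b)) :
    ∀ x ∈ Ioo a b,
      riemannLiouville (ν * (1 - μ)) a
          (deriv (fun y => riemannLiouville ((1 - ν) * (1 - μ)) a (kernelOp a k φ) y)) x
        = ∫ u in a..x,
            ((Real.Gamma (ν * (1 - μ)))⁻¹ *
              ∫ r in (0:ℝ)..(x - u),
                (x - u - r) ^ (ν * (1 - μ) - 1) * derivWithin κ (Ico 0 (b - a)) r) * φ u :=
  hilfer_deriv_of_kernelOp_general a b μ ν hμ1 hν0 hν1 k κ φ hk hκeq hκsm hκ0 hφ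
end

section
/- Let η > 0, ρ ≥ 1/η, ν ∈ ℝ with ηρ + ν > 0, let α > 0, w > 0 and β > α(ηρ+ν), and define the kernel k(s) = s^{β−1} λ^{(η)}_{ρ,ν}(w s^α) for s > 0. Let a < x be real numbers, μ > 0, and let φ : [a,x] → ℝ be bounded and measurable. Then (I^μ_{a+}(K_k φ))(x) = (K_k (I^μ_{a+} φ))(x) = ∫_a^x ( (1/Γ(μ)) ∫_0^{x−u} (x−u−r)^{μ−1} k(r) dr ) φ(u) du. (The paper's Corollaries 3 and 4: composition of the Riemann–Liouville integral with the integral operator whose kernel involves the generalized Macdonald function.) -/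
open MeasureTheory Set

/-- The generalized Macdonald-type function `λ^{(η)}_{ρ,ν}(z)` for real `z`. -/
noncomputable def macdonaldLambda (η ρ ν z : ℝ) : ℝ :=
  η / Real.Gamma (ρ + 1 - 1 / η) *
    ∫ t in Ioi (1:ℝ), (t ^ η - 1) ^ (ρ - 1 / η) * t ^ ν * Real.exp (-z * t)

/-!
Truncate the kernels to `[0, x - a)` and `φ` to `(a, x]`. Then `K_k φ` agrees on `[a, x]` with the
convolution `k̃ ⋆ φ̃`, and `I^μ_{a+} = K_h` for `h(s) = s^(μ-1) / Γ(μ)`. Both iterated operators are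
therefore `(h̃ ⋆ k̃) ⋆ φ̃` at `x`, by associativity of convolution and `h̃ ⋆ k̃ = k̃ ⋆ h̃`; the
convolutions exist because all three functions are integrable and `φ̃` is bounded. The Macdonald
kernel is integrable near `0`: by comparison with the Gamma integral,
`λ(z) ≤ η Γ(ηρ+ν) / Γ(ρ+1-1/η) · z^(-(ηρ+ν))`, so `k(s) = O(s^(β-1-α(ηρ+ν)))` with exponent `> -1`.
-/

open scoped Convolution
open ContinuousLinearMap (mul)

theorem integral_indicator_Ioc_eq_intervalIntegral {f : ℝ → ℝ} {a b : ℝ} (hab : a ≤ b) :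
    ∫ t, (Ioc a b).indicator f t = ∫ t in a..b, f t := by
  rw [integral_indicator measurableSet_Ioc, intervalIntegral.integral_of_le hab]

section Convolution

variable {a x : ℝ}

theorem convolution_indicator_Ico_eq_kernelOp (k G : ℝ → ℝ) (hax : a ≤ x) :
    ((Ico 0 (x - a)).indicator k ⋆[mul ℝ ℝ] G) x = kernelOp a k G x := by
  rw [convolution_mul_swap, kernelOp, ← integral_indicator_Ioc_eq_intervalIntegral hax]
  congr 1 with t
  simp only [indicator_apply, mem_Ioc, mem_Ico]
  split_ifs <;> grind

theorem convolution_indicator_Ico_indicator_Ioc {y : ℝ} (k φ : ℝ → ℝ) (hy : y ∈ Icc a x) :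
    ((Ico 0 (x - a)).indicator k ⋆[mul ℝ ℝ] (Ioc a x).indicator φ) y = kernelOp a k φ y := by
  rw [convolution_mul_swap, kernelOp, ← integral_indicator_Ioc_eq_intervalIntegral hy.1]
  congr 1 with t
  simp only [indicator_apply, mem_Ioc, mem_Ico]
  split_ifs <;> grind

theorem convolution_indicator_Ico_indicator_Ico {y : ℝ} (h k : ℝ → ℝ) {L : ℝ}
    (hy : y ∈ Ico 0 L) :
    ((Ico 0 L).indicator h ⋆[mul ℝ ℝ] (Ico 0 L).indicator k) y =
      ∫ r in (0:ℝ)..y, h (y - r) * k r := by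
  rw [convolution_mul_swap, intervalIntegral.integral_of_le hy.1, ← integral_Icc_eq_integral_Ioc,
    ← integral_indicator measurableSet_Icc]
  congr 1 with r
  simp only [indicator_apply, mem_Icc, mem_Ico]
  split_ifs <;> grind

theorem norm_indicator_le_abs {s : Set ℝ} {φ : ℝ → ℝ} {M : ℝ} (hM : ∀ t ∈ s, |φ t| ≤ M) (t : ℝ) :
    ‖s.indicator φ t‖ ≤ |M| := by
  by_cases ht : t ∈ s
  · rw [indicator_of_mem ht, Real.norm_eq_abs]
    exact (hM t ht).trans (le_abs_self M)
  · rw [indicator_of_notMem ht, norm_zero]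
    exact abs_nonneg M

theorem kernelOp_kernelOp_s16 {h k φ : ℝ → ℝ} (hax : a ≤ x)
    (hh : IntervalIntegrable h volume 0 (x - a)) (hk : IntervalIntegrable k volume 0 (x - a))
    (hφ : AEStronglyMeasurable φ) {M : ℝ} (hM : ∀ t ∈ Ioc a x, |φ t| ≤ M) :
    kernelOp a h (kernelOp a k φ) x =
      ∫ u in a..x, (∫ r in (0:ℝ)..(x - u), h (x - u - r) * k r) * φ u := by
  have hL : 0 ≤ x - a := sub_nonneg.2 hax
  -- `Ico 0 (x - a)` is chosen so that `h' (x - t) ≠ 0` only for `t ∈ Ioc a x`, matching `φ'`.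
  set h' := (Ico 0 (x - a)).indicator h
  set k' := (Ico 0 (x - a)).indicator k
  set φ' := (Ioc a x).indicator φ
  have hh' : Integrable h' := (integrable_indicator_iff measurableSet_Ico).2
    ((intervalIntegrable_iff_integrableOn_Ico_of_le hL).1 hh)
  have hk' : Integrable k' := (integrable_indicator_iff measurableSet_Ico).2
    ((intervalIntegrable_iff_integrableOn_Ico_of_le hL).1 hk)
  have hφ' : Integrable φ' := (integrable_indicator_iff measurableSet_Ioc).2
    (Measure.integrableOn_of_bounded measure_Ioc_lt_top.ne hφ
      ((ae_restrict_iff' measurableSet_Ioc).2 (ae_of_all _ fun t ht => hM t ht)))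
  have hint : Integrable (fun p : ℝ × ℝ => h' p.2 * k' (p.1 - p.2) * φ' (x - p.1))
      (volume.prod volume) :=
    (hh'.convolution_integrand (mul ℝ ℝ) hk').mul_bdd
      (hφ'.aestronglyMeasurable.comp_quasiMeasurePreserving
        (quasiMeasurePreserving_sub_left volume x)).comp_fst
      (ae_of_all _ fun p => norm_indicator_le_abs hM _)
  have hassoc : ((h' ⋆[mul ℝ ℝ] k') ⋆[mul ℝ ℝ] φ') x = (h' ⋆[mul ℝ ℝ] (k' ⋆[mul ℝ ℝ] φ')) x :=
    convolution_assoc' _ _ _ _ (fun _ _ _ => mul_assoc _ _ _)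
      (hh'.ae_convolution_exists _ hk') (hk'.ae_convolution_exists _ hφ')
      (by simpa only [Function.uncurry_def, ContinuousLinearMap.mul_apply', mul_assoc] using hint)
  calc kernelOp a h (kernelOp a k φ) x
      = kernelOp a h (k' ⋆[mul ℝ ℝ] φ') x := by
        refine intervalIntegral.integral_congr fun t ht => ?_
        rw [uIcc_of_le hax] at ht
        exact congrArg _ (convolution_indicator_Ico_indicator_Ioc k φ ht).symm
    _ = ((h' ⋆[mul ℝ ℝ] k') ⋆[mul ℝ ℝ] φ') x := by
        rw [hassoc, convolution_indicator_Ico_eq_kernelOp h _ hax]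
    _ = ∫ u in a..x, (h' ⋆[mul ℝ ℝ] k') (x - u) * φ u := by
        rw [convolution_mul_swap, ← integral_indicator_Ioc_eq_intervalIntegral hax]
        congr 1 with t
        exact (indicator_mul_right _ (fun t => (h' ⋆[mul ℝ ℝ] k') (x - t)) φ).symm
    _ = _ := by
        refine intervalIntegral.integral_congr_ae (ae_of_all _ fun u hu => ?_)
        rw [uIoc_of_le hax] at hu
        rw [convolution_indicator_Ico_indicator_Ico h k
          (show x - u ∈ Ico 0 (x - a) from ⟨by linarith [hu.2], by linarith [hu.1]⟩)]

theorem intervalIntegral_comp_sub_mul_comm (h k : ℝ → ℝ) (y : ℝ) :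
    ∫ r in (0:ℝ)..y, h (y - r) * k r = ∫ r in (0:ℝ)..y, k (y - r) * h r := by
  have := intervalIntegral.integral_comp_sub_left (fun s => h s * k (y - s)) (a := 0) (b := y) y
  simp only [sub_sub_cancel, sub_self, sub_zero] at this
  exact this.trans (intervalIntegral.integral_congr fun r _ => mul_comm _ _)

theorem kernelOp_comm {h k φ : ℝ → ℝ} (hax : a ≤ x)
    (hh : IntervalIntegrable h volume 0 (x - a)) (hk : IntervalIntegrable k volume 0 (x - a))
    (hφ : AEStronglyMeasurable φ) {M : ℝ} (hM : ∀ t ∈ Ioc a x, |φ t| ≤ M) :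
    kernelOp a h (kernelOp a k φ) x = kernelOp a k (kernelOp a h φ) x := by
  rw [kernelOp_kernelOp_s16 hax hh hk hφ hM, kernelOp_kernelOp_s16 hax hk hh hφ hM]
  simp_rw [intervalIntegral_comp_sub_mul_comm h k]

end Convolution

theorem riemannLiouville_eq_kernelOp_s16 (μ a : ℝ) (φ : ℝ → ℝ) :
    riemannLiouville μ a φ = kernelOp a (fun s => (Real.Gamma μ)⁻¹ * s ^ (μ - 1)) φ := by
  ext x
  rw [riemannLiouville, kernelOp, ← intervalIntegral.integral_const_mul]
  simp only [mul_assoc]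

section Macdonald

variable {η ρ ν : ℝ}

theorem rpow_sub_one_rpow_mul_rpow_le (hη : 0 < η) (hρ : 1 / η ≤ ρ) {t : ℝ} (ht : 1 ≤ t) :
    (t ^ η - 1) ^ (ρ - 1 / η) * t ^ ν ≤ t ^ (η * ρ + ν - 1) := by
  have ht0 : 0 < t := one_pos.trans_le ht
  have htη : 1 ≤ t ^ η := Real.one_le_rpow ht hη.le
  calc (t ^ η - 1) ^ (ρ - 1 / η) * t ^ ν
      ≤ (t ^ η) ^ (ρ - 1 / η) * t ^ ν := by
        gcongr
        linarith
    _ = t ^ (η * ρ + ν - 1) := by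
        rw [← Real.rpow_mul ht0.le, ← Real.rpow_add ht0]
        congr 1
        field_simp
        ring

theorem macdonaldLambda_integrand_nonneg (hη : 0 < η) (z : ℝ) {t : ℝ}
    (ht : 1 ≤ t) : 0 ≤ (t ^ η - 1) ^ (ρ - 1 / η) * t ^ ν * Real.exp (-z * t) := by
  have : 1 ≤ t ^ η := Real.one_le_rpow ht hη.le
  have := (one_pos.trans_le ht).le
  positivity

theorem macdonaldLambda_coeff_nonneg (hη : 0 < η) (hρ : 1 / η ≤ ρ) :
    0 ≤ η / Real.Gamma (ρ + 1 - 1 / η) :=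
  div_nonneg hη.le (Real.Gamma_pos_of_pos (by linarith)).le

theorem macdonaldLambda_nonneg (hη : 0 < η) (hρ : 1 / η ≤ ρ) (z : ℝ) :
    0 ≤ macdonaldLambda η ρ ν z :=
  mul_nonneg (macdonaldLambda_coeff_nonneg hη hρ)
    (setIntegral_nonneg measurableSet_Ioi fun _ ht =>
      macdonaldLambda_integrand_nonneg hη z (le_of_lt ht))

theorem macdonaldLambda_le (hη : 0 < η) (hρ : 1 / η ≤ ρ) (hσ : 0 < η * ρ + ν) {z : ℝ}
    (hz : 0 < z) :
    macdonaldLambda η ρ ν z ≤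
      η / Real.Gamma (ρ + 1 - 1 / η) * Real.Gamma (η * ρ + ν) * z ^ (-(η * ρ + ν)) := by
  set σ := η * ρ + ν
  have hgamma : ∫ t in Ioi (0:ℝ), t ^ (σ - 1) * Real.exp (-z * t) = Real.Gamma σ * z ^ (-σ) := by
    simp_rw [neg_mul]
    rw [Real.integral_rpow_mul_exp_neg_mul_Ioi hσ hz, one_div, Real.inv_rpow hz.le,
      ← Real.rpow_neg hz.le, mul_comm]
  have hint : IntegrableOn (fun t => t ^ (σ - 1) * Real.exp (-z * t)) (Ioi 0) := by
    simpa [Real.rpow_one] using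
      integrableOn_rpow_mul_exp_neg_mul_rpow (s := σ - 1) (by linarith) zero_lt_one hz
  have hnonneg : 0 ≤ᵐ[volume.restrict (Ioi 0)] fun t => t ^ (σ - 1) * Real.exp (-z * t) :=
    (ae_restrict_iff' measurableSet_Ioi).2 (ae_of_all _ fun t ht => by
      have : (0:ℝ) < t := ht
      positivity)
  rw [mul_assoc, ← hgamma, macdonaldLambda]
  refine mul_le_mul_of_nonneg_left ?_ (macdonaldLambda_coeff_nonneg hη hρ)
  calc ∫ t in Ioi (1:ℝ), (t ^ η - 1) ^ (ρ - 1 / η) * t ^ ν * Real.exp (-z * t)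
      ≤ ∫ t in Ioi (1:ℝ), t ^ (σ - 1) * Real.exp (-z * t) :=
        integral_mono_of_nonneg
          ((ae_restrict_iff' measurableSet_Ioi).2 (ae_of_all _ fun t ht =>
            macdonaldLambda_integrand_nonneg hη z (le_of_lt ht)))
          (hint.mono_set (Ioi_subset_Ioi zero_le_one))
          ((ae_restrict_iff' measurableSet_Ioi).2 (ae_of_all _ fun t ht =>
            mul_le_mul_of_nonneg_right
              (rpow_sub_one_rpow_mul_rpow_le hη hρ (le_of_lt ht)) (Real.exp_nonneg _)))
    _ ≤ ∫ t in Ioi (0:ℝ), t ^ (σ - 1) * Real.exp (-z * t) :=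
        setIntegral_mono_set hint hnonneg (Ioi_subset_Ioi zero_le_one).eventuallyLE

end Macdonald

@[fun_prop]
theorem measurable_macdonaldLambda (η ρ ν : ℝ) : Measurable (macdonaldLambda η ρ ν) := by
  have : StronglyMeasurable fun p : ℝ × ℝ =>
      (p.2 ^ η - 1) ^ (ρ - 1 / η) * p.2 ^ ν * Real.exp (-p.1 * p.2) := by
    apply Measurable.stronglyMeasurable
    fun_prop
  exact (this.integral_prod_right' (ν := volume.restrict (Ioi 1))).measurable.const_mul _

theorem intervalIntegrable_rpow_mul_macdonaldLambda {η ρ ν α w β : ℝ} (hη : 0 < η)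
    (hρ : 1 / η ≤ ρ) (hσ : 0 < η * ρ + ν) (hw : 0 < w) (hβ : α * (η * ρ + ν) < β) {L : ℝ}
    (hL : 0 ≤ L) :
    IntervalIntegrable (fun s => s ^ (β - 1) * macdonaldLambda η ρ ν (w * s ^ α)) volume 0 L := by
  set σ := η * ρ + ν
  set C := η / Real.Gamma (ρ + 1 - 1 / η) * Real.Gamma σ * w ^ (-σ)
  rw [intervalIntegrable_iff_integrableOn_Ioc_of_le hL]
  have hmajorant : IntegrableOn (fun s => C * s ^ (β - 1 - α * σ)) (Ioc 0 L) :=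
    ((intervalIntegrable_iff_integrableOn_Ioc_of_le hL).1
      (intervalIntegral.intervalIntegrable_rpow' (by linarith))).const_mul C
  refine hmajorant.mono' (by fun_prop) <|
    (ae_restrict_iff' measurableSet_Ioc).2 (ae_of_all _ fun s hs => ?_)
  have hs : 0 < s := hs.1
  have hz : 0 < w * s ^ α := by positivity
  rw [Real.norm_of_nonneg (mul_nonneg (by positivity) (macdonaldLambda_nonneg hη hρ _))]
  calc s ^ (β - 1) * macdonaldLambda η ρ ν (w * s ^ α)
      ≤ s ^ (β - 1) * (η / Real.Gamma (ρ + 1 - 1 / η) * Real.Gamma σ * (w * s ^ α) ^ (-σ)) := by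
        gcongr
        exact macdonaldLambda_le hη hρ hσ hz
    _ = C * s ^ (β - 1 - α * σ) := by
        rw [Real.mul_rpow hw.le (by positivity), ← Real.rpow_mul hs.le,
          sub_eq_add_neg (β - 1), Real.rpow_add hs, mul_neg]
        ring

theorem riemannLiouville_comm_macdonald_kernelOp_general (η ρ ν α w β : ℝ)
    (hη : 0 < η) (hρ : 1 / η ≤ ρ) (hν : 0 < η * ρ + ν)
    (hw : 0 < w) (hβ : α * (η * ρ + ν) < β)
    (a x μ : ℝ) (hax : a < x) (hμ : 0 < μ) (φ : ℝ → ℝ)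
    (hφm : Measurable φ)
    (hφb : ∃ M : ℝ, ∀ t ∈ Icc a x, |φ t| ≤ M) :
    riemannLiouville μ a
        (kernelOp a (fun s => s ^ (β - 1) * macdonaldLambda η ρ ν (w * s ^ α)) φ) x
      = kernelOp a (fun s => s ^ (β - 1) * macdonaldLambda η ρ ν (w * s ^ α))
          (riemannLiouville μ a φ) x ∧
    kernelOp a (fun s => s ^ (β - 1) * macdonaldLambda η ρ ν (w * s ^ α))
        (riemannLiouville μ a φ) x
      = ∫ u in a..x,
          ((Real.Gamma μ)⁻¹ *
            ∫ r in (0:ℝ)..(x - u),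
              (x - u - r) ^ (μ - 1) * (r ^ (β - 1) * macdonaldLambda η ρ ν (w * r ^ α))) *
            φ u := by
  obtain ⟨M, hM⟩ := hφb
  have hM' : ∀ t ∈ Ioc a x, |φ t| ≤ M := fun t ht => hM t (Ioc_subset_Icc_self ht)
  have hh : IntervalIntegrable (fun s : ℝ => (Real.Gamma μ)⁻¹ * s ^ (μ - 1)) volume 0 (x - a) :=
    (intervalIntegral.intervalIntegrable_rpow' (by linarith)).const_mul _
  have hk := intervalIntegrable_rpow_mul_macdonaldLambda hη hρ hν hw hβ (L := x - a)
    (sub_nonneg.2 hax.le)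
  rw [riemannLiouville_eq_kernelOp_s16, riemannLiouville_eq_kernelOp_s16,
    ← kernelOp_comm hax.le hh hk hφm.aestronglyMeasurable hM',
    kernelOp_kernelOp_s16 hax.le hh hk hφm.aestronglyMeasurable hM']
  refine ⟨rfl, intervalIntegral.integral_congr fun u _ => ?_⟩
  rw [← intervalIntegral.integral_const_mul]
  simp only [mul_assoc]

/-- Corollaries 3 and 4: the Riemann–Liouville integral commutes with the integral
operator whose kernel involves the generalized Macdonald function, and the composition
is the operator with the Riemann–Liouville-integrated kernel. -/
theorem riemannLiouville_comm_macdonald_kernelOp (η ρ ν α w β : ℝ)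
    (hη : 0 < η) (hρ : 1 / η ≤ ρ) (hν : 0 < η * ρ + ν)
    (hα : 0 < α) (hw : 0 < w) (hβ : α * (η * ρ + ν) < β)
    (a x μ : ℝ) (hax : a < x) (hμ : 0 < μ) (φ : ℝ → ℝ)
    (hφm : Measurable φ)
    (hφb : ∃ M : ℝ, ∀ t ∈ Icc a x, |φ t| ≤ M) :
    riemannLiouville μ a
        (kernelOp a (fun s => s ^ (β - 1) * macdonaldLambda η ρ ν (w * s ^ α)) φ) x
      = kernelOp a (fun s => s ^ (β - 1) * macdonaldLambda η ρ ν (w * s ^ α))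
          (riemannLiouville μ a φ) x ∧
    kernelOp a (fun s => s ^ (β - 1) * macdonaldLambda η ρ ν (w * s ^ α))
        (riemannLiouville μ a φ) x
      = ∫ u in a..x,
          ((Real.Gamma μ)⁻¹ *
            ∫ r in (0:ℝ)..(x - u),
              (x - u - r) ^ (μ - 1) * (r ^ (β - 1) * macdonaldLambda η ρ ν (w * r ^ α))) *
            φ u :=
  riemannLiouville_comm_macdonald_kernelOp_general η ρ ν α w β hη hρ hν hw hβ a x μ hax hμ φ hφm hφb
end
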